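/- For N ≥ 2 and W ∈ (0, 1/2), trace(H_W^N) - trace((H_W^N)^2) ≤ C log N for an absolute constant C. Equivalently, ∑_{k=0}^{N-1} λ_k(1 - λ_k) ≤ C log N, where λ_0 ≥ λ_1 ≥ … ≥ λ_{N-1} are the eigenvalues of H_W^N. -/

import Mathlib

open Real

/-- The Dirichlet kernel `D_N(x) = sin(Nπx)/sin(πx)`. -/
noncomputable def dirichletKernel (N : ℕ) (x : ℝ) : ℝ :=
  Real.sin (N * Real.pi * x) / Real.sin (Real.pi * x)

/-- The integral kernel of the Toeplitz operator `H_W^N`. -/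
noncomputable def toeplitzKernel (N : ℕ) (W : ℝ) (x y : ℝ) : ℝ :=
  ∫ z in (-W)..W, dirichletKernel N (x - z) * dirichletKernel N (y - z)

/-!
Write `D = D_N`, `K = toeplitzKernel N W` and `S = ∫_I D²`. Fubini and the 1-periodicity of `D²`
give `∫_I K(x, x) dx = 2W·S`. The frequencies `2j + 1 - N` of `D` are orthogonal on `I`, which
gives the reproducing identity `∫_I D(x - z) D(x - w) dx = D(z - w)`, hence
`∫_I ∫_I K² = ∫∫_{[-W,W]²} D(z - w)² dz dw`. Periodicity again turns the difference into
`∫_{-W}^{W} ∫_{W-w}^{1-W-w} D(v)² dv dw`. From `|D| ≤ N` and `sin(πv) ≥ 2v` on `[0, 1/2]`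
we get `D(v)² ≤ 4N²/(1 + Nv)²`, so the inner integral is at most
`4N/(1 + N(W - w)) + 4N/(1 + N(W + w))`, and integrating in `w` gives
`8 log(1 + 2NW) ≤ 16 log N`.
-/

open MeasureTheory

theorem Measurable.intervalIntegral_prod_right {α : Type*} [MeasurableSpace α]
    {f : α → ℝ → ℝ} (hf : Measurable (Function.uncurry f)) (c d : ℝ) :
    Measurable fun p ↦ ∫ z in c..d, f p z :=
  hf.stronglyMeasurable.integral_prod_right.measurable.sub
    hf.stronglyMeasurable.integral_prod_right.measurable

theorem intervalIntegral_integral_swap_of_abs_le {f : ℝ → ℝ → ℝ} {a b c d C : ℝ}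
    (hab : a ≤ b) (hcd : c ≤ d) (hf : Measurable (Function.uncurry f))
    (hC : ∀ x y, |f x y| ≤ C) :
    ∫ x in a..b, ∫ y in c..d, f x y = ∫ y in c..d, ∫ x in a..b, f x y := by
  simp only [intervalIntegral.integral_of_le hab, intervalIntegral.integral_of_le hcd]
  exact integral_integral_swap <| Integrable.of_bound hf.aestronglyMeasurable C <|
    ae_of_all _ fun p ↦ hC p.1 p.2

theorem abs_intervalIntegral_le_of_abs_le {f : ℝ → ℝ} {a b C : ℝ}
    (hC : ∀ z, |f z| ≤ C) : |∫ z in a..b, f z| ≤ C * |b - a| := by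
  simpa only [Real.norm_eq_abs] using
    intervalIntegral.norm_integral_le_of_norm_le_const (f := f) fun z _ ↦ hC z

theorem intervalIntegrable_of_abs_le {f : ℝ → ℝ} {C : ℝ} (hf : Measurable f)
    (hC : ∀ x, |f x| ≤ C) (a b : ℝ) : IntervalIntegrable f volume a b :=
  intervalIntegrable_const.mono_fun' hf.aestronglyMeasurable (ae_of_all _ hC)

theorem one_add_mul_pos_of_mem_uIcc {c a b v : ℝ} (hc : 0 ≤ c) (ha : 0 ≤ a) (hb : 0 ≤ b)
    (hv : v ∈ Set.uIcc a b) : 0 < 1 + c * v := by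
  have : 0 ≤ v := (le_min ha hb).trans hv.1
  positivity

theorem intervalIntegrable_sq_div_one_add_mul_sq {c a b : ℝ} (hc : 0 ≤ c) (ha : 0 ≤ a)
    (hb : 0 ≤ b) :
    IntervalIntegrable (fun v ↦ c ^ 2 / (1 + c * v) ^ 2) volume a b :=
  ContinuousOn.intervalIntegrable <| continuousOn_const.div (by fun_prop)
    fun _ hv ↦ (pow_pos (one_add_mul_pos_of_mem_uIcc hc ha hb hv) 2).ne'

theorem integral_sq_div_one_add_mul_sq {c a b : ℝ} (hc : 0 ≤ c) (ha : 0 ≤ a) (hb : 0 ≤ b) :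
    ∫ v in a..b, c ^ 2 / (1 + c * v) ^ 2 = c / (1 + c * a) - c / (1 + c * b) := by
  have hpos := fun v (hv : v ∈ Set.uIcc a b) ↦ one_add_mul_pos_of_mem_uIcc hc ha hb hv
  have hderiv : ∀ v ∈ Set.uIcc a b,
      HasDerivAt (fun v ↦ -c * (1 + c * v)⁻¹) (c ^ 2 / (1 + c * v) ^ 2) v := fun v hv ↦
    ((((hasDerivAt_id' v).const_mul c).const_add 1).inv (hpos v hv).ne').const_mul (-c)
      |>.congr_deriv (by ring)
  rw [intervalIntegral.integral_eq_sub_of_hasDerivAt hderiv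
    (intervalIntegrable_sq_div_one_add_mul_sq hc ha hb)]
  ring

theorem intervalIntegrable_div_one_add_mul {c a b : ℝ} (hc : 0 ≤ c) (ha : 0 ≤ a)
    (hb : 0 ≤ b) :
    IntervalIntegrable (fun t ↦ c / (1 + c * t)) volume a b :=
  ContinuousOn.intervalIntegrable <| continuousOn_const.div (by fun_prop)
    fun _ ht ↦ (one_add_mul_pos_of_mem_uIcc hc ha hb ht).ne'

theorem integral_div_one_add_mul {c T : ℝ} (hc : 0 ≤ c) (hT : 0 ≤ T) :
    ∫ t in (0:ℝ)..T, c / (1 + c * t) = log (1 + c * T) := by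
  have hderiv : ∀ t ∈ Set.uIcc 0 T,
      HasDerivAt (fun t ↦ log (1 + c * t)) (c / (1 + c * t)) t := fun t ht ↦ by
      simpa using (((hasDerivAt_id t).const_mul c).const_add 1).log
        (one_add_mul_pos_of_mem_uIcc hc le_rfl hT ht).ne'
  simp [intervalIntegral.integral_eq_sub_of_hasDerivAt hderiv
    (intervalIntegrable_div_one_add_mul hc le_rfl hT)]

theorem intervalIntegrable_inv_distance_to_ends {c W : ℝ} (hc : 0 ≤ c) (hW : 0 ≤ W) :
    IntervalIntegrable (fun w ↦ c / (1 + c * (W - w))) volume (-W) W ∧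
      IntervalIntegrable (fun w ↦ c / (1 + c * (W + w))) volume (-W) W := by
  have hint := intervalIntegrable_div_one_add_mul hc le_rfl (by linarith : 0 ≤ 2 * W)
  have h₁ := (hint.comp_sub_left W).symm
  have h₂ := hint.comp_add_left W
  rw [sub_zero, show W - 2 * W = -W by ring] at h₁
  rw [zero_sub, show 2 * W - W = W by ring] at h₂
  exact ⟨h₁, h₂⟩

theorem integral_inv_distance_to_ends {c W : ℝ} (hc : 0 ≤ c) (hW : 0 ≤ W) :
    ∫ w in (-W)..W, (4 * (c / (1 + c * (W - w))) + 4 * (c / (1 + c * (W + w))))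
      = 8 * log (1 + c * (2 * W)) := by
  obtain ⟨h₁, h₂⟩ := intervalIntegrable_inv_distance_to_ends hc hW
  rw [intervalIntegral.integral_add (h₁.const_mul 4) (h₂.const_mul 4),
    intervalIntegral.integral_const_mul, intervalIntegral.integral_const_mul,
    intervalIntegral.integral_comp_sub_left (fun t ↦ c / (1 + c * t)),
    intervalIntegral.integral_comp_add_left (fun t ↦ c / (1 + c * t)),
    sub_self, add_neg_cancel, show W - -W = 2 * W by ring, show W + W = 2 * W by ring,
    integral_div_one_add_mul hc (by linarith)]
  ring

theorem abs_sin_nat_mul_le (n : ℕ) (x : ℝ) : |sin (n * x)| ≤ n * |sin x| := by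
  induction n with
  | zero => simp
  | succ n ih =>
    rw [Nat.cast_succ, add_mul, one_mul, sin_add]
    calc |sin (n * x) * cos x + cos (n * x) * sin x|
        ≤ |sin (n * x)| * |cos x| + |cos (n * x)| * |sin x| := by
          rw [← abs_mul, ← abs_mul]; exact abs_add_le _ _
      _ ≤ n * |sin x| * 1 + 1 * |sin x| :=
          add_le_add (mul_le_mul ih (abs_cos_le_one x) (abs_nonneg _) (by positivity))
            (mul_le_mul_of_nonneg_right (abs_cos_le_one _) (abs_nonneg _))
      _ = (n + 1) * |sin x| := by ring

theorem integral_cos_two_int_mul_pi_add (l : ℤ) (c : ℝ) :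
    ∫ x in (-(1:ℝ)/2)..(1/2), cos (2 * l * π * x + c) = if l = 0 then cos c else 0 := by
  split_ifs with hl
  · simp [hl]; norm_num
  · have hne : 2 * (l : ℝ) * π ≠ 0 := by simp [hl, pi_ne_zero]
    rw [intervalIntegral.integral_comp_mul_add (fun x ↦ cos x) hne, integral_cos,
      show 2 * l * π * (1 / 2) + c = c + l * π by ring,
      show 2 * l * π * (-1 / 2) + c = c - l * π by ring, sin_add, sin_sub, sin_int_mul_pi]
    simp

namespace dirichletKernel

variable (N : ℕ)

theorem abs_le (u : ℝ) : |dirichletKernel N u| ≤ N := by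
  rcases eq_or_ne (sin (π * u)) 0 with h | h
  · simp [dirichletKernel, h]
  · rw [dirichletKernel, abs_div, div_le_iff₀ (abs_pos.mpr h), mul_assoc]
    exact abs_sin_nat_mul_le N _

theorem sq_le (u : ℝ) : dirichletKernel N u ^ 2 ≤ (N : ℝ) ^ 2 :=
  sq_le_sq.mpr ((abs_le N u).trans (le_abs_self _))

@[fun_prop]
theorem measurable : Measurable (dirichletKernel N) := by
  unfold dirichletKernel; fun_prop

theorem neg (u : ℝ) : dirichletKernel N (-u) = dirichletKernel N u := by
  simp only [dirichletKernel, mul_neg, sin_neg, neg_div_neg_eq]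

theorem add_one (u : ℝ) : dirichletKernel N (u + 1) = -(-1) ^ N * dirichletKernel N u := by
  simp only [dirichletKernel, mul_add, mul_one, sin_add_pi, sin_add_nat_mul_pi]
  ring

theorem sq_periodic : Function.Periodic (fun u ↦ dirichletKernel N u ^ 2) 1 := fun u ↦ by
  dsimp only
  rw [add_one, mul_pow, neg_sq, ← pow_mul, Even.neg_one_pow ⟨N, by ring⟩, one_mul]

theorem sq_one_sub (v : ℝ) : dirichletKernel N (1 - v) ^ 2 = dirichletKernel N v ^ 2 := by
  simpa only [sub_eq_neg_add, neg] using sq_periodic N (-v)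

theorem sum_cos_mul_sin (θ : ℝ) :
    (∑ j ∈ Finset.range N, cos ((2 * j + 1 - N) * θ)) * sin θ = sin (N * θ) := by
  have step (j : ℕ) : cos ((2 * j + 1 - N) * θ) * sin θ
      = (sin ((2 * (j + 1 : ℕ) - N) * θ) - sin ((2 * j - N) * θ)) / 2 := by
    rw [show (2 * ((j + 1 : ℕ) : ℝ) - N) * θ = (2 * j + 1 - N) * θ + θ by push_cast; ring,
      show (2 * (j : ℝ) - N) * θ = (2 * j + 1 - N) * θ - θ by ring, sin_add, sin_sub]
    ring
  rw [Finset.sum_mul, Finset.sum_congr rfl fun j _ ↦ step j, ← Finset.sum_div,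
    Finset.sum_range_sub (fun j : ℕ ↦ sin ((2 * j - N) * θ))]
  rw [show (2 * (N : ℝ) - N) * θ = N * θ by ring, Nat.cast_zero,
    show (2 * (0 : ℝ) - N) * θ = -(N * θ) by ring, sin_neg]
  ring

theorem eq_sum_cos {u : ℝ} (h : sin (π * u) ≠ 0) :
    dirichletKernel N u = ∑ j ∈ Finset.range N, cos ((2 * j + 1 - N) * (π * u)) := by
  rw [dirichletKernel, div_eq_iff h, sum_cos_mul_sin, mul_assoc]

theorem ae_sin_pi_sub_ne_zero (z : ℝ) : ∀ᵐ x ∂volume, sin (π * (x - z)) ≠ 0 := by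
  filter_upwards [(Set.countable_range fun n : ℤ ↦ z + n).ae_notMem volume] with x hx hsin
  obtain ⟨n, hn⟩ := sin_eq_zero_iff.mp hsin
  exact hx ⟨n, by nlinarith [pi_pos]⟩

theorem intervalIntegrable_sq (a b : ℝ) :
    IntervalIntegrable (fun v ↦ dirichletKernel N v ^ 2) volume a b :=
  intervalIntegrable_of_abs_le (by fun_prop)
    (fun v ↦ (abs_of_nonneg (sq_nonneg _)).trans_le (sq_le N v)) a b

/-- The frequency `2j + 1 - N` meets `±(2k + 1 - N)` exactly when `k = j` or `j + k + 1 = N`. -/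
theorem integral_cos_mul_cos (j k : ℕ) (z w : ℝ) :
    ∫ x in (-(1:ℝ)/2)..(1/2),
        cos ((2 * j + 1 - N) * (π * (x - z))) * cos ((2 * k + 1 - N) * (π * (x - w)))
      = ((if k = j then 1 else 0) + (if j + k + 1 = N then 1 else 0)) / 2
          * cos ((2 * j + 1 - N) * (π * (w - z))) := by
  set a : ℝ := 2 * j + 1 - N
  set b : ℝ := 2 * k + 1 - N
  have product_to_sum (x : ℝ) : cos (a * (π * (x - z))) * cos (b * (π * (x - w)))
      = (cos (2 * ((j - k : ℤ) : ℝ) * π * x + (b * π * w - a * π * z))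
        + cos (2 * ((j + k + 1 - N : ℤ) : ℝ) * π * x + (-(a * π * z) - b * π * w))) / 2 := by
    rw [show cos (a * (π * (x - z))) * cos (b * (π * (x - w)))
      = (cos (a * (π * (x - z)) - b * (π * (x - w)))
        + cos (a * (π * (x - z)) + b * (π * (x - w)))) / 2 by rw [cos_sub, cos_add]; ring]
    congr 3 <;> push_cast [a, b] <;> ring
  have diagonal : (if (j - k : ℤ) = 0 then cos (b * π * w - a * π * z) else 0)
      = (if k = j then 1 else 0) * cos (a * (π * (w - z))) := by
    split_ifs with h₁ h₂ h₂
    · have hab : b = a := by simp only [a, b, h₂]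
      rw [hab, one_mul]; ring_nf
    all_goals first | omega | simp
  have antidiagonal : (if (j + k + 1 - N : ℤ) = 0 then cos (-(a * π * z) - b * π * w) else 0)
      = (if j + k + 1 = N then 1 else 0) * cos (a * (π * (w - z))) := by
    split_ifs with h₁ h₂ h₂
    · have hab : b = -a := by
        have : (j : ℝ) + k + 1 = N := by exact_mod_cast h₂
        simp only [a, b]; linarith
      rw [hab, one_mul]; ring_nf
    all_goals first | omega | simp
  simp only [product_to_sum, intervalIntegral.integral_div]
  rw [intervalIntegral.integral_add
    (Continuous.intervalIntegrable (by fun_prop) _ _)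
    (Continuous.intervalIntegrable (by fun_prop) _ _), integral_cos_two_int_mul_pi_add,
    integral_cos_two_int_mul_pi_add, diagonal, antidiagonal]
  ring

theorem sum_diagonal_add_antidiagonal {j : ℕ} (hj : j < N) :
    ∑ k ∈ Finset.range N, ((if k = j then 1 else 0) + (if j + k + 1 = N then 1 else 0) : ℝ)
      = 2 := by
  have hanti (k : ℕ) : (j + k + 1 = N) ↔ k = N - 1 - j := by omega
  simp only [hanti, Finset.sum_add_distrib, Finset.sum_ite_eq', Finset.mem_range, hj,
    show N - 1 - j < N by omega]
  norm_num

theorem integral_comp_sub_mul_comp_sub {z w : ℝ} (h : sin (π * (z - w)) ≠ 0) :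
    ∫ x in (-(1:ℝ)/2)..(1/2), dirichletKernel N (x - z) * dirichletKernel N (x - w)
      = dirichletKernel N (z - w) := by
  have hwz : sin (π * (w - z)) ≠ 0 := by rwa [← neg_sub, mul_neg, sin_neg, neg_ne_zero]
  calc ∫ x in (-(1:ℝ)/2)..(1/2), dirichletKernel N (x - z) * dirichletKernel N (x - w)
      = ∫ x in (-(1:ℝ)/2)..(1/2), ∑ j ∈ Finset.range N, ∑ k ∈ Finset.range N,
          cos ((2 * j + 1 - N) * (π * (x - z))) * cos ((2 * k + 1 - N) * (π * (x - w))) := by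
        refine intervalIntegral.integral_congr_ae ?_
        filter_upwards [ae_sin_pi_sub_ne_zero z, ae_sin_pi_sub_ne_zero w] with x hz hw _
        rw [eq_sum_cos N hz, eq_sum_cos N hw, Finset.sum_mul_sum]
    _ = ∑ j ∈ Finset.range N, cos ((2 * j + 1 - N) * (π * (w - z))) := by
        rw [intervalIntegral.integral_finsetSum fun j _ ↦
          Continuous.intervalIntegrable (by fun_prop) _ _]
        refine Finset.sum_congr rfl fun j hj ↦ ?_
        rw [intervalIntegral.integral_finsetSum fun k _ ↦
          Continuous.intervalIntegrable (by fun_prop) _ _]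
        rw [Finset.sum_congr rfl fun k _ ↦ integral_cos_mul_cos N j k z w, ← Finset.sum_mul,
          ← Finset.sum_div, sum_diagonal_add_antidiagonal N (Finset.mem_range.mp hj)]
        ring
    _ = dirichletKernel N (z - w) := by rw [← eq_sum_cos N hwz, ← neg_sub, neg]

theorem integral_sq_comp_sub_right (z : ℝ) :
    ∫ x in (-(1:ℝ)/2)..(1/2), dirichletKernel N (x - z) ^ 2
      = ∫ v in (-(1:ℝ)/2)..(1/2), dirichletKernel N v ^ 2 := by
  rw [intervalIntegral.integral_comp_sub_right (fun v ↦ dirichletKernel N v ^ 2),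
    show (1:ℝ)/2 - z = (-(1:ℝ)/2 - z) + 1 by ring,
    (sq_periodic N).intervalIntegral_add_eq _ (-(1:ℝ)/2), show -(1:ℝ)/2 + 1 = 1/2 by norm_num]

theorem integral_mul_intervalIntegral {g : ℝ → ℝ} (hg : Measurable g) {C : ℝ}
    (hC : ∀ z, |g z| ≤ C) {a b : ℝ} (hab : a ≤ b) (w : ℝ) :
    ∫ x in (-(1:ℝ)/2)..(1/2),
        dirichletKernel N (x - w) * ∫ z in a..b, g z * dirichletKernel N (x - z)
      = ∫ z in a..b, g z * dirichletKernel N (z - w) := by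
  have hC0 : 0 ≤ C := (abs_nonneg _).trans (hC 0)
  calc _ = ∫ x in (-(1:ℝ)/2)..(1/2), ∫ z in a..b,
          dirichletKernel N (x - w) * (g z * dirichletKernel N (x - z)) := by
        simp only [intervalIntegral.integral_const_mul]
    _ = ∫ z in a..b, ∫ x in (-(1:ℝ)/2)..(1/2),
          dirichletKernel N (x - w) * (g z * dirichletKernel N (x - z)) := by
        refine intervalIntegral_integral_swap_of_abs_le (C := N * (C * N)) (by norm_num) hab
          (by fun_prop) fun x z ↦ ?_
        simp only [abs_mul]
        gcongr <;> apply_rules [abs_le, abs_nonneg]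
    _ = ∫ z in a..b, g z * dirichletKernel N (z - w) := by
        refine intervalIntegral.integral_congr_ae ?_
        filter_upwards [ae_sin_pi_sub_ne_zero w] with z hz _
        rw [← integral_comp_sub_mul_comp_sub N hz, ← intervalIntegral.integral_const_mul]
        congr 1 with x
        ring

theorem intervalIntegrable_integral_sq_comp_sub (W a b : ℝ) :
    IntervalIntegrable (fun w ↦ ∫ z in (-W)..W, dirichletKernel N (z - w) ^ 2) volume a b := by
  have hmeas : Measurable (Function.uncurry fun (w z : ℝ) ↦ dirichletKernel N (z - w) ^ 2) := by
    fun_prop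
  refine intervalIntegrable_of_abs_le (hmeas.intervalIntegral_prod_right _ _)
    (C := N ^ 2 * |W - -W|) (fun w ↦ abs_intervalIntegral_le_of_abs_le fun z ↦ ?_) a b
  exact (abs_of_nonneg (sq_nonneg _)).trans_le (sq_le N _)

theorem integral_sq_sub_integral_sq_comp_sub (W w : ℝ) :
    (∫ v in (-(1:ℝ)/2)..(1/2), dirichletKernel N v ^ 2)
        - ∫ z in (-W)..W, dirichletKernel N (z - w) ^ 2
      = ∫ v in (W - w)..(1 - (W + w)), dirichletKernel N v ^ 2 := by
  rw [intervalIntegral.integral_comp_sub_right (fun v ↦ dirichletKernel N v ^ 2),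
    show (1:ℝ)/2 = -(1:ℝ)/2 + 1 by norm_num,
    (sq_periodic N).intervalIntegral_add_eq _ (-W - w),
    show 1 - (W + w) = -W - w + 1 by ring,
    ← intervalIntegral.integral_add_adjacent_intervals (intervalIntegrable_sq N _ (W - w))
      (intervalIntegrable_sq N _ _)]
  ring

theorem sq_le_of_nonneg_of_le_half {v : ℝ} (hv0 : 0 ≤ v) (hv : v ≤ 1 / 2) :
    dirichletKernel N v ^ 2 ≤ 4 * (N ^ 2 / (1 + N * v) ^ 2) := by
  have hNv : 0 ≤ N * v := by positivity
  rcases le_or_gt (N * v) 1 with hsmall | hlarge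
  · calc dirichletKernel N v ^ 2 ≤ N ^ 2 := sq_le N v
      _ ≤ _ := by
        have h4 : (1 + N * v) ^ 2 ≤ 4 := by nlinarith
        rw [mul_div_assoc', le_div_iff₀ (by positivity)]
        nlinarith [mul_le_mul_of_nonneg_left h4 (sq_nonneg (N : ℝ))]
  · have hv_pos : 0 < v := by
      by_contra! h
      nlinarith [(Nat.cast_nonneg N : (0 : ℝ) ≤ N)]
    have hsin : 2 * v ≤ sin (π * v) := by
      have := mul_le_sin (x := π * v) (by positivity) (by nlinarith [pi_pos])
      rwa [show 2 / π * (π * v) = 2 * v by field_simp] at this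
    calc dirichletKernel N v ^ 2 ≤ 1 / (2 * v) ^ 2 := by
          rw [dirichletKernel, div_pow]
          exact div_le_div₀ zero_le_one (sin_sq_le_one _) (by positivity)
            (pow_le_pow_left₀ (by positivity) hsin 2)
      _ ≤ _ := by
        rw [mul_div_assoc', div_le_div_iff₀ (by positivity) (by positivity)]
        nlinarith

theorem sq_le_of_mem_Icc {v : ℝ} (hv0 : 0 ≤ v) (hv1 : v ≤ 1) :
    dirichletKernel N v ^ 2
      ≤ 4 * (N ^ 2 / (1 + N * v) ^ 2) + 4 * (N ^ 2 / (1 + N * (1 - v)) ^ 2) := by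
  rcases le_total v (1 / 2) with h | h
  · have := sq_le_of_nonneg_of_le_half N hv0 h
    have : 0 ≤ 4 * ((N : ℝ) ^ 2 / (1 + N * (1 - v)) ^ 2) := by positivity
    linarith
  · have := sq_le_of_nonneg_of_le_half N (v := 1 - v) (by linarith) (by linarith)
    rw [sq_one_sub] at this
    have : 0 ≤ 4 * ((N : ℝ) ^ 2 / (1 + N * v) ^ 2) := by positivity
    linarith

theorem integral_sq_le {s t : ℝ} (hs : 0 ≤ s) (ht : 0 ≤ t) (hst : s + t ≤ 1) :
    ∫ v in s..(1 - t), dirichletKernel N v ^ 2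
      ≤ 4 * (N / (1 + N * s)) + 4 * (N / (1 + N * t)) := by
  have hN : (0 : ℝ) ≤ N := Nat.cast_nonneg N
  have h₁ := intervalIntegrable_sq_div_one_add_mul_sq hN hs (by linarith : 0 ≤ 1 - t)
  have h₂ := (intervalIntegrable_sq_div_one_add_mul_sq hN ht
    (by linarith : 0 ≤ 1 - s)).comp_sub_left 1
  rw [sub_sub_cancel] at h₂
  calc ∫ v in s..(1 - t), dirichletKernel N v ^ 2
      ≤ ∫ v in s..(1 - t),
          (4 * (N ^ 2 / (1 + N * v) ^ 2) + 4 * (N ^ 2 / (1 + N * (1 - v)) ^ 2)) :=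
        intervalIntegral.integral_mono_on (by linarith) (intervalIntegrable_sq N _ _)
          ((h₁.const_mul 4).add (h₂.symm.const_mul 4))
          fun v hv ↦ sq_le_of_mem_Icc N (by linarith [hv.1]) (by linarith [hv.2])
    _ = 4 * (N / (1 + N * s) - N / (1 + N * (1 - t)))
          + 4 * (N / (1 + N * t) - N / (1 + N * (1 - s))) := by
        rw [intervalIntegral.integral_add (h₁.const_mul 4) (h₂.symm.const_mul 4),
          intervalIntegral.integral_const_mul, intervalIntegral.integral_const_mul,
          intervalIntegral.integral_comp_sub_left (fun v ↦ (N : ℝ) ^ 2 / (1 + N * v) ^ 2),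
          sub_sub_cancel, integral_sq_div_one_add_mul_sq hN hs (by linarith),
          integral_sq_div_one_add_mul_sq hN ht (by linarith)]
    _ ≤ _ := by
        have : 0 ≤ (N : ℝ) / (1 + N * (1 - t)) := div_nonneg hN (by nlinarith)
        have : 0 ≤ (N : ℝ) / (1 + N * (1 - s)) := div_nonneg hN (by nlinarith)
        linarith

end dirichletKernel

namespace toeplitzKernel

variable (N : ℕ)

theorem measurable_uncurry (W : ℝ) :
    Measurable (Function.uncurry (toeplitzKernel N W)) := by
  have hmeas : Measurable (Function.uncurry fun (p : ℝ × ℝ) (z : ℝ) ↦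
      dirichletKernel N (p.1 - z) * dirichletKernel N (p.2 - z)) := by
    fun_prop
  exact hmeas.intervalIntegral_prod_right (-W) W

@[fun_prop]
theorem measurable (W x : ℝ) : Measurable (toeplitzKernel N W x) :=
  (measurable_uncurry N W).of_uncurry_left

theorem abs_le (W x y : ℝ) : |toeplitzKernel N W x y| ≤ N ^ 2 * |W - -W| :=
  abs_intervalIntegral_le_of_abs_le fun z ↦ by
    rw [abs_mul, sq]
    exact mul_le_mul (dirichletKernel.abs_le N _) (dirichletKernel.abs_le N _) (abs_nonneg _)
      (Nat.cast_nonneg N)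

variable {W : ℝ}

theorem integral_diag (hW : 0 ≤ W) :
    ∫ x in (-(1:ℝ)/2)..(1/2), toeplitzKernel N W x x
      = 2 * W * ∫ v in (-(1:ℝ)/2)..(1/2), dirichletKernel N v ^ 2 := by
  calc _ = ∫ x in (-(1:ℝ)/2)..(1/2), ∫ z in (-W)..W, dirichletKernel N (x - z) ^ 2 := by
        simp only [toeplitzKernel, sq]
    _ = ∫ z in (-W)..W, ∫ x in (-(1:ℝ)/2)..(1/2), dirichletKernel N (x - z) ^ 2 :=
        intervalIntegral_integral_swap_of_abs_le (by norm_num) (by linarith) (by fun_prop)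
          fun x z ↦ (abs_of_nonneg (sq_nonneg _)).trans_le (dirichletKernel.sq_le N _)
    _ = _ := by
        simp only [dirichletKernel.integral_sq_comp_sub_right, intervalIntegral.integral_const,
          smul_eq_mul]
        ring

theorem integral_sq_right (hW : 0 ≤ W) (x : ℝ) :
    ∫ y in (-(1:ℝ)/2)..(1/2), toeplitzKernel N W x y ^ 2
      = ∫ w in (-W)..W, dirichletKernel N (x - w) *
          ∫ z in (-W)..W, dirichletKernel N (x - z) * dirichletKernel N (z - w) := by
  calc _ = ∫ y in (-(1:ℝ)/2)..(1/2), ∫ w in (-W)..W,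
          dirichletKernel N (x - w) * (dirichletKernel N (y - w) * toeplitzKernel N W x y) := by
        congr 1 with y
        rw [sq]
        nth_rewrite 2 [toeplitzKernel]
        rw [← intervalIntegral.integral_const_mul]
        congr 1 with w
        ring
    _ = ∫ w in (-W)..W, ∫ y in (-(1:ℝ)/2)..(1/2),
          dirichletKernel N (x - w) * (dirichletKernel N (y - w) * toeplitzKernel N W x y) := by
        refine intervalIntegral_integral_swap_of_abs_le (by norm_num) (by linarith)
          (C := N * (N * (N ^ 2 * |W - -W|))) (by fun_prop) fun y w ↦ ?_
        simp only [abs_mul]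
        gcongr <;> apply_rules [dirichletKernel.abs_le, abs_le, abs_nonneg]
    _ = _ := by
        congr 1 with w
        rw [intervalIntegral.integral_const_mul]
        unfold toeplitzKernel
        rw [dirichletKernel.integral_mul_intervalIntegral N (by fun_prop)
          (fun z ↦ dirichletKernel.abs_le N _) (by linarith)]

theorem integral_integral_sq (hW : 0 ≤ W) :
    ∫ x in (-(1:ℝ)/2)..(1/2), ∫ y in (-(1:ℝ)/2)..(1/2), toeplitzKernel N W x y ^ 2
      = ∫ w in (-W)..W, ∫ z in (-W)..W, dirichletKernel N (z - w) ^ 2 := by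
  have hJ : Measurable fun p : ℝ × ℝ ↦
      ∫ z in (-W)..W, dirichletKernel N (z - p.2) * dirichletKernel N (p.1 - z) := by
    have hmeas : Measurable (Function.uncurry fun (p : ℝ × ℝ) (z : ℝ) ↦
        dirichletKernel N (z - p.2) * dirichletKernel N (p.1 - z)) := by
      fun_prop
    exact hmeas.intervalIntegral_prod_right (-W) W
  calc _ = ∫ x in (-(1:ℝ)/2)..(1/2), ∫ w in (-W)..W, dirichletKernel N (x - w) *
          ∫ z in (-W)..W, dirichletKernel N (z - w) * dirichletKernel N (x - z) := by
        congr 1 with x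
        rw [integral_sq_right N hW]
        congr 1 with w
        congr 2 with z
        ring
    _ = ∫ w in (-W)..W, ∫ x in (-(1:ℝ)/2)..(1/2), dirichletKernel N (x - w) *
          ∫ z in (-W)..W, dirichletKernel N (z - w) * dirichletKernel N (x - z) := by
        refine intervalIntegral_integral_swap_of_abs_le (by norm_num) (by linarith)
          (C := N * (N * N * |W - -W|)) ?_ fun x w ↦ ?_
        · exact (dirichletKernel.measurable N).comp (measurable_fst.sub measurable_snd) |>.mul hJ
        · rw [abs_mul]
          gcongr
          · exact dirichletKernel.abs_le N _
          · exact abs_intervalIntegral_le_of_abs_le fun z ↦ by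
              rw [abs_mul]
              exact mul_le_mul (dirichletKernel.abs_le N _) (dirichletKernel.abs_le N _)
                (abs_nonneg _) (Nat.cast_nonneg N)
    _ = _ := by
        congr 1 with w
        rw [dirichletKernel.integral_mul_intervalIntegral N (by fun_prop)
          (fun z ↦ dirichletKernel.abs_le N _) (by linarith)]
        simp only [sq]

theorem trace_sub_trace_sq_le (hW0 : 0 ≤ W) (hW : W ≤ 1 / 2) :
    (∫ x in (-(1:ℝ)/2)..(1/2), toeplitzKernel N W x x)
        - (∫ x in (-(1:ℝ)/2)..(1/2), ∫ y in (-(1:ℝ)/2)..(1/2), (toeplitzKernel N W x y)^2)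
      ≤ 8 * log (1 + N * (2 * W)) := by
  have hN : (0 : ℝ) ≤ N := Nat.cast_nonneg N
  have hinner := dirichletKernel.intervalIntegrable_integral_sq_comp_sub N W (-W) W
  obtain ⟨h₁, h₂⟩ := intervalIntegrable_inv_distance_to_ends hN hW0
  rw [integral_diag N hW0, integral_integral_sq N hW0]
  calc _ = ∫ w in (-W)..W, ((∫ v in (-(1:ℝ)/2)..(1/2), dirichletKernel N v ^ 2)
          - ∫ z in (-W)..W, dirichletKernel N (z - w) ^ 2) := by
        rw [intervalIntegral.integral_sub intervalIntegrable_const hinner,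
          intervalIntegral.integral_const, smul_eq_mul]
        ring
    _ ≤ ∫ w in (-W)..W, (4 * (N / (1 + N * (W - w))) + 4 * (N / (1 + N * (W + w)))) := by
        refine intervalIntegral.integral_mono_on (by linarith)
          (intervalIntegrable_const.sub hinner) ?_ fun w hw ↦ ?_
        · exact (h₁.const_mul 4).add (h₂.const_mul 4)
        · rw [dirichletKernel.integral_sq_sub_integral_sq_comp_sub]
          exact dirichletKernel.integral_sq_le N (by linarith [hw.2]) (by linarith [hw.1])
            (by linarith)
    _ = _ := integral_inv_distance_to_ends hN hW0

end toeplitzKernel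

/-- `trace(H_W^N) - trace((H_W^N)²) ≤ C log N` for an absolute constant `C`,
where `trace(H_W^N) = ∫_I K(x,x) dx` and `trace((H_W^N)²) = ∫_I ∫_I |K(x,y)|² dx dy`.
Equivalently, `∑_{k<N} λ_k (1 - λ_k) ≤ C log N` for the eigenvalues of `H_W^N`. -/
theorem toeplitz_trace_minus_trace_sq_bound :
    ∃ C : ℝ, 0 < C ∧ ∀ (N : ℕ), 2 ≤ N → ∀ W : ℝ, W ∈ Set.Ioo (0:ℝ) (1/2) →
      (∫ x in (-(1:ℝ)/2)..(1/2), toeplitzKernel N W x x)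
        - (∫ x in (-(1:ℝ)/2)..(1/2), ∫ y in (-(1:ℝ)/2)..(1/2), (toeplitzKernel N W x y)^2)
        ≤ C * Real.log N := by
  refine ⟨16, by norm_num, fun N hN W ⟨hW0, hW⟩ ↦ ?_⟩
  have hN2 : (2 : ℝ) ≤ N := by exact_mod_cast hN
  calc _ ≤ 8 * log (1 + N * (2 * W)) := toeplitzKernel.trace_sub_trace_sq_le N hW0.le hW.le
    _ ≤ 8 * log ((N : ℝ) ^ 2) := by gcongr; nlinarith
    _ = 16 * log N := by rw [log_pow]; ring
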